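/- arXiv:2406.10656 — 3 statements merged into one kernel-verified Lean document; each statement's English description precedes it below -/
import Mathlib

section
/- Let (ψ_n) be a sequence of nonnegative convex functions ℝ^d → ℝ and fix x ∈ ℝ^d. Define I^b(x) as the set of y ∈ ℝ^d such that lim_{ε↓0} sup_n sup{ψ̄_n(y) : ψ̄_n = ψ_n + aff, ψ̄_n ≥ 0, ψ̄_n(x) < ε} < ∞, and I^B(x) = ri I^b(x). Then x ∈ I^B(x), i.e. x lies in the relative interior of I^b(x). -/
open MeasureTheory Set

noncomputable section

variable {d : ℕ}

/-- The representatives of `ψ_n` that are nonnegative and take a value `< ε` at `x`: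
all functions of the form `ψ_n + aff` with `aff` affine, `ψ_n + aff ≥ 0` and
`(ψ_n + aff)(x) < ε`. -/
def reps (Ψ : ℕ → EuclideanSpace ℝ (Fin d) → ℝ) (n : ℕ) (x : EuclideanSpace ℝ (Fin d))
    (ε : ℝ) : Set (EuclideanSpace ℝ (Fin d) → ℝ) :=
  {g | ∃ (a : EuclideanSpace ℝ (Fin d)) (b : ℝ),
    (∀ y, g y = Ψ n y + (inner ℝ a y + b)) ∧ (∀ y, 0 ≤ g y) ∧ g x < ε}

/-- `I^b(x)`: the set of `y` such that
`lim_{ε↓0} sup_n sup_{ψ̄_n ∈ [ψ_n]^{x,ε}} ψ̄_n(y) < ∞`.  Since the inner supremum is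
nonincreasing as `ε ↓ 0`, finiteness of the limit is equivalent to finiteness of the
supremum for some `ε > 0`. -/
def Ib (Ψ : ℕ → EuclideanSpace ℝ (Fin d) → ℝ) (x : EuclideanSpace ℝ (Fin d)) :
    Set (EuclideanSpace ℝ (Fin d)) :=
  {y | ∃ ε > (0 : ℝ), ∃ M : ℝ, ∀ n, ∀ g ∈ reps Ψ n x ε, g y ≤ M}

/-- `I^B(x)`: the relative interior of `I^b(x)`. -/
def IB (Ψ : ℕ → EuclideanSpace ℝ (Fin d) → ℝ) (x : EuclideanSpace ℝ (Fin d)) :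
    Set (EuclideanSpace ℝ (Fin d)) :=
  intrinsicInterior ℝ (Ib Ψ x)

/-!
`I^b(x)` is convex and contains `x`, so it suffices that each segment from `y ∈ I^b(x)` to `x`
prolongs a little beyond `x` inside `I^b(x)`: in finite dimension such a point is relatively
interior. To bound a representative `g` (small at `x`) at `z = x + t (x - y)`, take an affine
minorant `ℓ` of `g` with `ℓ(z)` close to `g(z)`, and let `q` be its slope from `y` towards `x`,
so `ℓ(z) ≤ g(x) + t q`. The function `g - θ ℓ` is again a nonnegative representative of `ψ_n`;
for `θ = ε / (ε + t q)` it is still small at `x`, so the bound at `y` applies to it and caps `q`.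
-/

open Metric

section IntrinsicInterior

variable {E : Type*} [NormedAddCommGroup E] [NormedSpace ℝ E] {s : Set E} {x : E}

theorem mem_intrinsicInterior_iff_exists_ball :
    x ∈ intrinsicInterior ℝ s ↔
      x ∈ affineSpan ℝ s ∧ ∃ r > 0, ball x r ∩ affineSpan ℝ s ⊆ s := by
  constructor
  · rintro ⟨y, hy, rfl⟩
    obtain ⟨r, hr, hball⟩ := Metric.mem_nhds_iff.1 (mem_interior_iff_mem_nhds.1 hy)
    exact ⟨y.2, r, hr, fun u ⟨hu, hA⟩ =>
      hball (show (⟨u, hA⟩ : affineSpan ℝ s) ∈ ball y r from hu)⟩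
  · rintro ⟨hx, r, hr, hball⟩
    refine ⟨⟨x, hx⟩, mem_interior_iff_mem_nhds.2 (Metric.mem_nhds_iff.2 ⟨r, hr, ?_⟩), rfl⟩
    exact fun u hu => hball ⟨hu, u.2⟩

theorem Convex.openSegment_intrinsicInterior_self_subset_intrinsicInterior (hs : Convex ℝ s)
    {w y : E} (hw : w ∈ intrinsicInterior ℝ s) (hy : y ∈ s) :
    openSegment ℝ w y ⊆ intrinsicInterior ℝ s := by
  rintro z ⟨a, b, ha, hb, hab, rfl⟩
  obtain ⟨-, r, hr, hball⟩ := mem_intrinsicInterior_iff_exists_ball.1 hw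
  have hzs : a • w + b • y ∈ s := hs (intrinsicInterior_subset hw) hy ha.le hb.le hab
  refine mem_intrinsicInterior_iff_exists_ball.2
    ⟨subset_affineSpan ℝ s hzs, a * r, mul_pos ha hr, fun u ⟨hu, huA⟩ => ?_⟩
  -- `u` is the same combination of `y` and a point `w'` of `ball w r`
  set w' := a⁻¹ • (u - (a • w + b • y)) + w
  have hw'A : w' ∈ affineSpan ℝ s :=
    AffineSubspace.vadd_mem_of_mem_direction (Submodule.smul_mem _ _
      (AffineSubspace.vsub_mem_direction huA (subset_affineSpan ℝ s hzs)))
      (subset_affineSpan ℝ s (intrinsicInterior_subset hw))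
  have hw'ball : w' ∈ ball w r := by
    rw [mem_ball, dist_eq_norm, add_sub_cancel_right, norm_smul, Real.norm_eq_abs,
      abs_of_pos (inv_pos.2 ha), inv_mul_lt_iff₀ ha, ← dist_eq_norm]
    exact hu
  have hu_eq : u = a • w' + b • y := by
    simp only [w', smul_add, smul_smul, mul_inv_cancel₀ ha.ne', one_smul]
    abel
  rw [hu_eq]
  exact hs (hball ⟨hw'ball, hw'A⟩) hy ha.le hb.le hab

theorem Convex.mem_intrinsicInterior_of_forall_exists_add_smul_sub_mem [FiniteDimensional ℝ E]
    (hs : Convex ℝ s) (hx : x ∈ s) (h : ∀ y ∈ s, ∃ t > (0 : ℝ), x + t • (x - y) ∈ s) :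
    x ∈ intrinsicInterior ℝ s := by
  obtain ⟨w, hw⟩ := Set.Nonempty.intrinsicInterior hs ⟨x, hx⟩
  obtain ⟨t, ht, hpt⟩ := h w (intrinsicInterior_subset hw)
  refine hs.openSegment_intrinsicInterior_self_subset_intrinsicInterior hw hpt
    ⟨t / (1 + t), 1 / (1 + t), by positivity, by positivity, by field_simp; ring, ?_⟩
  match_scalars
  · field_simp; ring
  · field_simp

end IntrinsicInterior

theorem ConvexOn.exists_inner_add_le_of_lt {E : Type*} [NormedAddCommGroup E]
    [InnerProductSpace ℝ E] [CompleteSpace E] {f : E → ℝ} (hf : ConvexOn ℝ univ f)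
    (hfc : LowerSemicontinuous f) {z : E} {a : ℝ} (ha : a < f z) :
    ∃ (p : E) (c : ℝ), (∀ u, inner ℝ p u + c ≤ f u) ∧ inner ℝ p z + c = a := by
  obtain ⟨l, c, hle, hz⟩ := hf.exists_affine_le_of_lt (𝕜 := ℝ) (mem_univ z) ha isClosed_univ
    (hfc.lowerSemicontinuousOn univ)
  refine ⟨(InnerProductSpace.toDual ℝ E).symm l, c, fun u => ?_, ?_⟩
  · simpa [InnerProductSpace.toDual_symm_apply] using hle ⟨u, mem_univ u⟩
  · simpa [InnerProductSpace.toDual_symm_apply] using hz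

section Ib

variable {Ψ : ℕ → EuclideanSpace ℝ (Fin d) → ℝ} {n : ℕ} {x y : EuclideanSpace ℝ (Fin d)}
  {ε ε' : ℝ} {g : EuclideanSpace ℝ (Fin d) → ℝ}

lemma reps_mono (h : ε ≤ ε') : reps Ψ n x ε ⊆ reps Ψ n x ε' :=
  fun _ ⟨a, b, hg, hpos, hx⟩ => ⟨a, b, hg, hpos, hx.trans_le h⟩

lemma convexOn_of_mem_reps (hconv : ConvexOn ℝ univ (Ψ n)) (hg : g ∈ reps Ψ n x ε) :
    ConvexOn ℝ univ g := by
  obtain ⟨a, b, hg, -, -⟩ := hg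
  rw [show g = fun y => Ψ n y + (inner ℝ a y + b) from funext hg]
  exact hconv.add (((innerₛₗ ℝ a).convexOn convex_univ).add_const b)

lemma sub_mul_affine_mem_reps (hg : g ∈ reps Ψ n x ε) {p : EuclideanSpace ℝ (Fin d)} {c θ : ℝ}
    (hle : ∀ u, inner ℝ p u + c ≤ g u) (hθ₀ : 0 ≤ θ) (hθ₁ : θ ≤ 1)
    (hx : g x - θ * (inner ℝ p x + c) < ε') :
    (fun u => g u - θ * (inner ℝ p u + c)) ∈ reps Ψ n x ε' := by
  obtain ⟨a, b, hg, hpos, -⟩ := hg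
  refine ⟨a - θ • p, b - θ * c, fun u => ?_, fun u => ?_, hx⟩
  · simp only [hg u, inner_sub_left, real_inner_smul_left]
    ring
  · -- `g - θ ℓ = (1 - θ) g + θ (g - ℓ)` with `ℓ = ⟪p, ·⟫ + c ≤ g`
    nlinarith [hpos u, hle u]

lemma self_mem_Ib : x ∈ Ib Ψ x :=
  ⟨1, one_pos, 1, fun _ _ ⟨_, _, _, _, hx⟩ => hx.le⟩

lemma convex_Ib (hconv : ∀ n, ConvexOn ℝ univ (Ψ n)) : Convex ℝ (Ib Ψ x) := by
  rintro y₁ ⟨ε₁, hε₁, M₁, hM₁⟩ y₂ ⟨ε₂, hε₂, M₂, hM₂⟩ α β hα hβ hαβ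
  refine ⟨min ε₁ ε₂, lt_min hε₁ hε₂, max M₁ M₂, fun n g hg => ?_⟩
  have hg₁ := (hM₁ n g (reps_mono (min_le_left _ _) hg)).trans (le_max_left M₁ M₂)
  have hg₂ := (hM₂ n g (reps_mono (min_le_right _ _) hg)).trans (le_max_right M₁ M₂)
  calc g (α • y₁ + β • y₂) ≤ α * g y₁ + β * g y₂ :=
        (convexOn_of_mem_reps (hconv n) hg).2 (mem_univ _) (mem_univ _) hα hβ hαβ
    _ ≤ α * max M₁ M₂ + β * max M₁ M₂ := by gcongr
    _ = max M₁ M₂ := by rw [← add_mul, hαβ, one_mul]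

lemma apply_add_smul_sub_le_of_mem_reps (hconv : ConvexOn ℝ univ (Ψ n)) {M t : ℝ}
    (hε : 0 < ε) (hM₀ : 0 ≤ M) (hM : ∀ g' ∈ reps Ψ n x (2 * ε), g' y ≤ M) (ht : 0 < t)
    (htM : M * t ≤ ε / 2) (hg : g ∈ reps Ψ n x ε) :
    g (x + t • (x - y)) ≤ ε + t * (2 * ε + 2 * M) := by
  set z := x + t • (x - y)
  have hB : 0 < ε + t * (2 * ε + 2 * M) := by positivity
  refine le_of_forall_lt fun a ha => ?_
  rcases lt_or_ge a 0 with ha₀ | ha₀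
  · linarith
  have hgc := convexOn_of_mem_reps hconv hg
  obtain ⟨p, c, hle, hz⟩ :=
    hgc.exists_inner_add_le_of_lt hgc.locallyLipschitz.continuous.lowerSemicontinuous ha
  obtain ⟨-, -, -, hpos, hgx⟩ := id hg
  set q := inner ℝ p (x - y)
  have hℓx : inner ℝ p x + c = a - t * q := by
    simp only [← hz, z, q, inner_add_right, real_inner_smul_right]; ring
  have hℓy : inner ℝ p y + c = a - (1 + t) * q := by
    simp only [← hz, z, q, inner_add_right, real_inner_smul_right, inner_sub_right]; ring
  have haq : a < ε + t * q := by linarith [hle x]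
  rcases le_or_gt q 0 with hq | hq
  · nlinarith
  -- `θ` is chosen so that `g - θ ℓ` is still below `2ε` at `x`, hence below `M` at `y`
  set θ := ε / (ε + t * q)
  have hθ : θ * (ε + t * q) = ε := div_mul_cancel₀ _ (by positivity)
  have hθ₀ : 0 < θ := by positivity
  have hθ₁ : θ ≤ 1 := (div_le_one (by positivity)).2 (by nlinarith)
  have htilt := hM _ (sub_mul_affine_mem_reps (ε' := 2 * ε) hg hle
    hθ₀.le hθ₁ (by rw [hℓx]; nlinarith))
  have hq_le : q ≤ 2 * ε + 2 * M := by
    have : ε * (q - ε) ≤ M * (ε + t * q) := by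
      rw [hℓy] at htilt
      nlinarith [hpos y]
    nlinarith
  nlinarith [mul_le_mul_of_nonneg_left hq_le ht.le]

lemma exists_add_smul_sub_mem_Ib (hconv : ∀ n, ConvexOn ℝ univ (Ψ n)) (hy : y ∈ Ib Ψ x) :
    ∃ t > (0 : ℝ), x + t • (x - y) ∈ Ib Ψ x := by
  obtain ⟨ε₀, hε₀, M, hM⟩ := hy
  set ε := ε₀ / 2
  set M' := max M 0
  have hε : 0 < ε := half_pos hε₀
  have hM' : ∀ n, ∀ g' ∈ reps Ψ n x (2 * ε), g' y ≤ M' := fun n g' hg' =>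
    (hM n g' (reps_mono (by simp only [ε]; linarith) hg')).trans (le_max_left M 0)
  have ht : 0 < ε / (2 * (M' + 1)) := by positivity
  have htM : M' * (ε / (2 * (M' + 1))) ≤ ε / 2 := by
    rw [mul_div_assoc', div_le_div_iff₀ (by positivity) two_pos]
    nlinarith [le_max_right M 0]
  exact ⟨_, ht, ε, hε, _, fun n g hg =>
    apply_add_smul_sub_le_of_mem_reps (hconv n) hε (le_max_right M 0) (hM' n) ht htM hg⟩

end Ib

theorem mem_IB_self_general (Ψ : ℕ → EuclideanSpace ℝ (Fin d) → ℝ)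
    (hconv : ∀ n, ConvexOn ℝ Set.univ (Ψ n))
    (x : EuclideanSpace ℝ (Fin d)) :
    x ∈ IB Ψ x :=
  (convex_Ib hconv).mem_intrinsicInterior_of_forall_exists_add_smul_sub_mem self_mem_Ib
    fun _ hy => exists_add_smul_sub_mem_Ib hconv hy

/-- For a sequence of nonnegative convex functions `ψ_n`, the point `x` lies in the
relative interior of `I^b(x)`, i.e. `x ∈ I^B(x)`. -/
theorem mem_IB_self (Ψ : ℕ → EuclideanSpace ℝ (Fin d) → ℝ)
    (hconv : ∀ n, ConvexOn ℝ Set.univ (Ψ n)) (hpos : ∀ n y, 0 ≤ Ψ n y)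
    (x : EuclideanSpace ℝ (Fin d)) :
    x ∈ IB Ψ x :=
  mem_IB_self_general Ψ hconv x
end
end

section
/- Let C ⊆ ℝ^d be a convex set, x a relative boundary point of C, and x̄ ∈ ri C with |x - x̄| = 1. Suppose ψ : ℝ^d → ℝ is convex, ψ ≥ 0, ψ(x) < ε for some ε ∈ (0,1), and ψ(x + ε²(x - x̄)) - ψ(x) ≥ 1. Then there exists an affine function aff : ℝ^d → ℝ with aff ≤ ψ on ℝ^d, aff(x) = -ε, and ψ(x̄) - aff(x̄) ≥ 1/ε. -/
/-!
Along the line `t ↦ x + t • (x - xb)` the function `ψ` is convex, nonnegative and rises by at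
least `1` between `t = 0` and `t = ε²`; monotonicity of secant slopes then forces
`ψ (x + t • (x - xb)) ≥ t / ε²` for `t ≥ ε²`, so the affine function `t ↦ t / ε - ε` minorizes `ψ`
on the whole line. Separating the open strict epigraph of `ψ` from the graph of this affine
function (geometric Hahn–Banach) extends it to an affine minorant of `ψ` on all of `ℝ^d`, and its
value at `xb`, the point `t = -1`, is `-1 / ε - ε`.
-/

open Set

theorem ConvexOn.comp_add_smul {𝕜 E β : Type*} [Field 𝕜] [LinearOrder 𝕜] [AddCommGroup E]
    [Module 𝕜 E] [AddCommMonoid β] [PartialOrder β] [SMul 𝕜 β] {ψ : E → β}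
    (hψ : ConvexOn 𝕜 univ ψ) (x v : E) : ConvexOn 𝕜 univ fun t : 𝕜 => ψ (x + t • v) := by
  simpa only [preimage_univ, Function.comp_def, AffineMap.lineMap_apply_module',
    add_sub_cancel_left, add_comm] using hψ.comp_affineMap (AffineMap.lineMap x (x + v))

theorem ConvexOn.div_sub_le_of_one_le_sub {φ : ℝ → ℝ} (hφ : ConvexOn ℝ univ φ)
    (hφ0 : ∀ t, 0 ≤ φ t) {ε : ℝ} (hε0 : 0 < ε) (hε1 : ε < 1) (hgrow : 1 ≤ φ (ε ^ 2) - φ 0)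
    (t : ℝ) : t / ε - ε ≤ φ t := by
  rcases le_or_gt t (ε ^ 2) with ht | ht
  · have : t / ε ≤ ε := by rw [div_le_iff₀ hε0]; nlinarith
    linarith [hφ0 t]
  have ht0 : 0 < t := (pow_pos hε0 2).trans ht
  have hslope : (φ (ε ^ 2) - φ 0) / (ε ^ 2 - 0) ≤ (φ t - φ 0) / (t - 0) :=
    hφ.secant_mono (mem_univ 0) (mem_univ _) (mem_univ _) (by positivity) ht0.ne' ht.le
  rw [sub_zero, sub_zero, div_le_div_iff₀ (by positivity) ht0] at hslope
  calc t / ε - ε ≤ t / ε := by linarith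
    _ ≤ t / ε ^ 2 := div_le_div_of_nonneg_left ht0.le (by positivity) (by nlinarith)
    _ ≤ φ t := by rw [div_le_iff₀ (by positivity)]; nlinarith [hφ0 0]

theorem eq_of_forall_add_mul_le {a b m n : ℝ} (h : ∀ t, a + t * m ≤ b + t * n) : m = n := by
  by_contra hmn
  have := h ((b - a + 1) / (m - n))
  have hcancel : (b - a + 1) / (m - n) * (m - n) = b - a + 1 :=
    div_mul_cancel₀ _ (sub_ne_zero.mpr hmn)
  nlinarith

namespace ConvexOn

variable {E : Type*} [NormedAddCommGroup E] [NormedSpace ℝ E] {ψ : E → ℝ}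

theorem exists_affine_minorant_above_convex (hψ : ConvexOn ℝ univ ψ) (hcont : Continuous ψ)
    {L : Set (E × ℝ)} (hL : Convex ℝ L) (hLne : L.Nonempty) (hLψ : ∀ p ∈ L, p.2 ≤ ψ p.1) :
    ∃ (f : StrongDual ℝ E) (b : ℝ), (∀ z, f z + b ≤ ψ z) ∧ ∀ p ∈ L, p.2 ≤ f p.1 + b := by
  have hopen : IsOpen {p : E × ℝ | p.1 ∈ univ ∧ ψ p.1 < p.2} := by
    simpa only [mem_univ, true_and, Function.comp_def] using
      isOpen_lt (hcont.comp continuous_fst) continuous_snd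
  have hdisj : Disjoint {p : E × ℝ | p.1 ∈ univ ∧ ψ p.1 < p.2} L :=
    disjoint_left.mpr fun p hp hpL => (hLψ p hpL).not_gt hp.2
  obtain ⟨F, s, hFA, hFL⟩ := geometric_hahn_banach_open hψ.convex_strict_epigraph hopen hL hdisj
  set g : StrongDual ℝ E := F.comp (ContinuousLinearMap.inl ℝ E ℝ)
  set c : ℝ := F (0, 1)
  have hF : ∀ z r, F (z, r) = g z + r * c := fun z r => by
    rw [show ((z, r) : E × ℝ) = (z, 0) + r • (0, 1) by simp, map_add, map_smul]
    simp [g, c]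
  have hlt : ∀ z r, ψ z < r → g z + r * c < s := fun z r h => hF z r ▸ hFA (z, r) ⟨trivial, h⟩
  have hge : ∀ p ∈ L, s ≤ g p.1 + p.2 * c := fun p hp => hF p.1 p.2 ▸ hFL p hp
  obtain ⟨p, hp⟩ := hLne
  have hc : c < 0 := by
    by_contra! hc
    have := hlt p.1 (ψ p.1 + 1) (by linarith)
    nlinarith [hge p hp, hLψ p hp]
  have haff : ∀ z r, r ≤ ((-c)⁻¹ • g) z + s / c ↔ s ≤ g z + r * c := fun z r => by
    rw [show ((-c)⁻¹ • g) z + s / c = (s - g z) / c by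
        simp only [inv_neg, smul_apply, smul_eq_mul, neg_mul]
        field_simp
        ring,
      le_div_iff_of_neg hc, sub_le_iff_le_add']
  refine ⟨(-c)⁻¹ • g, s / c, fun z => ?_, fun q hq => (haff q.1 q.2).mpr (hge q hq)⟩
  by_contra! hz
  obtain ⟨r, hψr, hr⟩ := exists_between hz
  exact (hlt z r hψr).not_ge ((haff z r).mp hr.le)

theorem exists_affine_minorant_eq_on_line (hψ : ConvexOn ℝ univ ψ) (hcont : Continuous ψ)
    (x v : E) (α β : ℝ) (hle : ∀ t : ℝ, α + t * β ≤ ψ (x + t • v)) :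
    ∃ (f : StrongDual ℝ E) (b : ℝ),
      (∀ z, f z + b ≤ ψ z) ∧ ∀ t : ℝ, f (x + t • v) + b = α + t * β := by
  set line : ℝ →ᵃ[ℝ] E × ℝ := AffineMap.lineMap (x, α) (x + v, α + β)
  have hline : ∀ t, line t = (x + t • v, α + t * β) := fun t => by
    simp [line, AffineMap.lineMap_apply_module', add_comm]
  obtain ⟨f, b, hmin, hf⟩ := hψ.exists_affine_minorant_above_convex hcont
    (by simpa using convex_univ.affine_image line) (range_nonempty line)
    (forall_mem_range.mpr fun t => by simpa [hline] using hle t)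
  have hf' : ∀ t : ℝ, α + t * β ≤ (f x + b) + t * f v := fun t => by
    simpa [hline, add_right_comm] using hf _ (mem_range_self t)
  have hslope : β = f v := eq_of_forall_add_mul_le hf'
  refine ⟨f, α - f x, fun z => by linarith [hmin z, hf' 0], fun t => ?_⟩
  rw [map_add, map_smul, smul_eq_mul, hslope]
  ring

end ConvexOn

theorem exists_affine_minorant_boundary_general {d : ℕ}
    (x xb : EuclideanSpace ℝ (Fin d))
    (ψ : EuclideanSpace ℝ (Fin d) → ℝ) (hψ : ConvexOn ℝ Set.univ ψ)
    (hψ0 : ∀ z, 0 ≤ ψ z) (ε : ℝ) (hε : ε ∈ Set.Ioo (0 : ℝ) 1)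
    (hgrow : 1 ≤ ψ (x + ε ^ 2 • (x - xb)) - ψ x) :
    ∃ (a : EuclideanSpace ℝ (Fin d)) (b : ℝ),
      (∀ z, inner ℝ a z + b ≤ ψ z) ∧
      (inner ℝ a x + b = -ε) ∧
      (1 / ε ≤ ψ xb - (inner ℝ a xb + b)) := by
  obtain ⟨hε0, hε1⟩ := hε
  have hline : ∀ t : ℝ, -ε + t * ε⁻¹ ≤ ψ (x + t • (x - xb)) := fun t => by
    have := (hψ.comp_add_smul x (x - xb)).div_sub_le_of_one_le_sub (fun _ => hψ0 _) hε0 hε1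
      (by simpa using hgrow) t
    linarith [div_eq_mul_inv t ε]
  obtain ⟨f, b, hmin, hf⟩ := hψ.exists_affine_minorant_eq_on_line
    (continuousOn_univ.mp (hψ.continuousOn isOpen_univ)) x (x - xb) (-ε) ε⁻¹ hline
  refine ⟨(InnerProductSpace.toDual ℝ _).symm f, b, ?_, ?_, ?_⟩ <;>
    simp only [InnerProductSpace.toDual_symm_apply]
  · exact hmin
  · simpa using hf 0
  · have hxb : x + (-1 : ℝ) • (x - xb) = xb := by module
    rw [← hxb, hf, one_div]
    linarith [hψ0 (x + (-1 : ℝ) • (x - xb))]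

/-- Key geometric lemma: let `C ⊆ ℝ^d` be convex, `x` a relative boundary point of `C`,
`x̄ ∈ ri C` with `‖x - x̄‖ = 1`.  If `ψ` is convex, nonnegative, `ψ(x) < ε` for some
`ε ∈ (0,1)` and `ψ(x + ε²(x - x̄)) - ψ(x) ≥ 1`, then there exists an affine function
`aff ≤ ψ` on `ℝ^d` with `aff(x) = -ε` and `ψ(x̄) - aff(x̄) ≥ 1/ε`. -/
theorem exists_affine_minorant_boundary {d : ℕ}
    (C : Set (EuclideanSpace ℝ (Fin d))) (hC : Convex ℝ C)
    (x xb : EuclideanSpace ℝ (Fin d))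
    (hx : x ∈ closure C \ intrinsicInterior ℝ C)
    (hxb : xb ∈ intrinsicInterior ℝ C)
    (hdist : ‖x - xb‖ = 1)
    (ψ : EuclideanSpace ℝ (Fin d) → ℝ) (hψ : ConvexOn ℝ Set.univ ψ)
    (hψ0 : ∀ z, 0 ≤ ψ z) (ε : ℝ) (hε : ε ∈ Set.Ioo (0 : ℝ) 1)
    (hψx : ψ x < ε)
    (hgrow : 1 ≤ ψ (x + ε ^ 2 • (x - xb)) - ψ x) :
    ∃ (a : EuclideanSpace ℝ (Fin d)) (b : ℝ),
      (∀ z, inner ℝ a z + b ≤ ψ z) ∧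
      (inner ℝ a x + b = -ε) ∧
      (1 / ε ≤ ψ xb - (inner ℝ a xb + b)) :=
  exists_affine_minorant_boundary_general x xb ψ hψ hψ0 ε hε hgrow
end

section
/- Let f_n : ℝ^d → [0,∞] be lower semicontinuous convex functions, π a probability measure on ℝ^d × ℝ^d with disintegration π(dx,dy) = π_x(dy) μ(dx) such that ∫ y π_x(dy) = x μ-a.s., K a measurable set with μ(K) > 0, H an open half space, and suppose: (i) sup_n ∫∫ (f_n(y) − f_n(x)) π_x(dy) μ(dx) = a < ∞; (ii) sup_n sup_{x∈K} f_n(x) = m < ∞; (iii) f_n(y) → ∞ for every y ∈ H; (iv) c := ∫_K π_x(H) μ(dx) > 0 and the barycenter ỹ of the normalized measure (1/c)∫_K π_x|_H(·) μ(dx) lies in H. Then a ≥ c·sup_n f_n(ỹ) − m·μ(K) = +∞, a contradiction. Hence under (i)–(ii), if f_n → ∞ pointwise on an open half space H disjoint from K's paving cell, then ∫_K π_x(H) μ(dx) = 0. -/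
open MeasureTheory Set Filter
open scoped ENNReal

noncomputable section

/-! Jensen's inequality for the martingale kernel makes every increment
`∫ (f_n(y) - f_n(x)) π_x(dy)` nonnegative, so on `K` the masses `∫_K ∫ f_n dπ_x dμ` are bounded
by `a + m μ(K)`, uniformly in `n`. By Fatou's lemma, `∫_K ∫ liminf_n f_n dπ_x dμ` is then finite,
whereas `liminf_n f_n = ∞` on `H`: hence `π_x(H) = 0` for `μ`-almost every `x ∈ K`. -/

theorem lintegral_measure_eq_zero_of_tendsto_top {α β : Type*} [MeasurableSpace α]
    [MeasurableSpace β] {μ : Measure α} {κ : α → Measure β} (hκ : Measurable κ)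
    {F : ℕ → β → ℝ≥0∞} (hF : ∀ n, Measurable (F n)) {B : ℝ≥0∞} (hB : B ≠ ∞)
    (hbound : ∀ n, ∫⁻ x, ∫⁻ y, F n y ∂κ x ∂μ ≤ B) {S : Set β}
    (hS : ∀ y ∈ S, Tendsto (fun n => F n y) atTop (nhds ∞)) :
    ∫⁻ x, κ x S ∂μ = 0 := by
  set G : β → ℝ≥0∞ := fun y => liminf (fun n => F n y) atTop
  have hG : Measurable G := .liminf hF
  have hGint : Measurable fun x => ∫⁻ y, G y ∂κ x := (Measure.measurable_lintegral hG).comp hκ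
  have hfatou : ∫⁻ x, ∫⁻ y, G y ∂κ x ∂μ ≤ B :=
    calc ∫⁻ x, ∫⁻ y, G y ∂κ x ∂μ
        ≤ ∫⁻ x, liminf (fun n => ∫⁻ y, F n y ∂κ x) atTop ∂μ :=
          lintegral_mono fun x => lintegral_liminf_le hF
      _ ≤ liminf (fun n => ∫⁻ x, ∫⁻ y, F n y ∂κ x ∂μ) atTop :=
          lintegral_liminf_le fun n => (Measure.measurable_lintegral (hF n)).comp hκ
      _ ≤ B := liminf_le_of_frequently_le (.of_forall hbound)
  have hfinite : ∀ᵐ x ∂μ, ∫⁻ y, G y ∂κ x < ∞ := ae_lt_top hGint (ne_top_of_le_ne_top hB hfatou)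
  have hnull : ∀ᵐ x ∂μ, κ x S = 0 := by
    filter_upwards [hfinite] with x hx
    refine measure_mono_null (fun y hy => ?_) (measure_eq_top_of_lintegral_ne_top
      hG.aemeasurable hx.ne)
    exact (hS y hy).liminf_eq
  simpa using lintegral_congr_ae hnull

section MartingaleKernel

variable {E : Type*} [NormedAddCommGroup E] [NormedSpace ℝ E] [FiniteDimensional ℝ E]
  [MeasurableSpace E]

theorem ConvexOn.le_integral_of_integral_id_eq {f : E → ℝ} (hf : ConvexOn ℝ univ f)
    {ν : Measure E} [IsProbabilityMeasure ν] {x : E} (hid : Integrable (fun y => y) ν)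
    (hbar : ∫ y, y ∂ν = x) (hfi : Integrable f ν) :
    f x ≤ ∫ y, f y ∂ν := by
  have := hf.map_integral_le (hf.continuousOn isOpen_univ) isClosed_univ
    (.of_forall fun y => mem_univ y) hid hfi
  rwa [hbar] at this

theorem ConvexOn.integral_sub_nonneg_of_integral_id_eq {f : E → ℝ} (hf : ConvexOn ℝ univ f)
    {ν : Measure E} [IsProbabilityMeasure ν] {x : E} (hid : Integrable (fun y => y) ν)
    (hbar : ∫ y, y ∂ν = x) (hfi : Integrable f ν) :
    0 ≤ ∫ y, (f y - f x) ∂ν := by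
  rw [integral_sub hfi (integrable_const _), integral_const, probReal_univ, one_smul, sub_nonneg]
  exact hf.le_integral_of_integral_id_eq hid hbar hfi

theorem setLIntegral_lintegral_ofReal_le {μ : Measure E} [IsFiniteMeasure μ]
    {π : E → Measure E} (hπprob : ∀ x, IsProbabilityMeasure (π x))
    (hmart : ∀ᵐ x ∂μ, Integrable (fun y => y) (π x) ∧ (∫ y, y ∂(π x)) = x)
    {f : E → ℝ} (hfconv : ConvexOn ℝ univ f) (hfpos : ∀ y, 0 ≤ f y)
    (hfi : ∀ᵐ x ∂μ, Integrable f (π x))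
    (hgap : Integrable (fun x => ∫ y, (f y - f x) ∂(π x)) μ)
    {K : Set E} (hK : MeasurableSet K) {m : ℝ} (hm : ∀ x ∈ K, f x ≤ m) :
    ∫⁻ x in K, ∫⁻ y, ENNReal.ofReal (f y) ∂(π x) ∂μ
      ≤ ENNReal.ofReal ((∫ x, ∫ y, (f y - f x) ∂(π x) ∂μ) + m * μ.real K) := by
  set φ : E → ℝ := fun x => ∫ y, (f y - f x) ∂(π x)
  have hφ : ∀ᵐ x ∂μ, 0 ≤ φ x ∧ ∫⁻ y, ENNReal.ofReal (f y) ∂(π x) = ENNReal.ofReal (φ x + f x) := by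
    filter_upwards [hmart, hfi] with x ⟨hid, hbar⟩ hfx
    refine ⟨hfconv.integral_sub_nonneg_of_integral_id_eq hid hbar hfx, ?_⟩
    rw [← ofReal_integral_eq_lintegral_ofReal hfx (.of_forall hfpos)]
    simp [φ, integral_sub hfx (integrable_const _)]
  calc ∫⁻ x in K, ∫⁻ y, ENNReal.ofReal (f y) ∂(π x) ∂μ
      ≤ ∫⁻ x in K, ENNReal.ofReal (φ x + m) ∂μ := by
        refine lintegral_mono_ae ?_
        filter_upwards [ae_restrict_of_ae hφ, ae_restrict_mem hK] with x ⟨_, hx⟩ hxK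
        rw [hx]
        gcongr
        exact hm x hxK
    _ = ENNReal.ofReal (∫ x in K, (φ x + m) ∂μ) := by
        refine (ofReal_integral_eq_lintegral_ofReal (hgap.restrict.add (integrable_const m)) ?_).symm
        filter_upwards [ae_restrict_of_ae hφ, ae_restrict_mem hK] with x ⟨hx, _⟩ hxK
        show 0 ≤ φ x + m
        linarith [hfpos x, hm x hxK]
    _ ≤ ENNReal.ofReal ((∫ x, φ x ∂μ) + m * μ.real K) := by
        rw [integral_add hgap.restrict (integrable_const m), setIntegral_const, smul_eq_mul,
          mul_comm]
        gcongr
        · exact hφ.mono fun x hx => hx.1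
        · exact Measure.restrict_le_self

end MartingaleKernel

theorem halfspace_mass_vanishes_general {d : ℕ}
    (μ : Measure (EuclideanSpace ℝ (Fin d))) [IsProbabilityMeasure μ]
    (π : EuclideanSpace ℝ (Fin d) → Measure (EuclideanSpace ℝ (Fin d)))
    (hπprob : ∀ x, IsProbabilityMeasure (π x)) (hπmeas : Measurable π)
    (hmart : ∀ᵐ x ∂μ, Integrable (fun y => y) (π x) ∧ (∫ y, y ∂(π x)) = x)
    (f : ℕ → EuclideanSpace ℝ (Fin d) → ℝ)
    (hfconv : ∀ n, ConvexOn ℝ Set.univ (f n))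
    (hfmeas : ∀ n, Measurable (f n))
    (hfpos : ∀ n y, 0 ≤ f n y)
    (hI1 : ∀ n, ∀ᵐ x ∂μ, Integrable (f n) (π x))
    (hI2 : ∀ n, Integrable (fun x => ∫ y, (f n y - f n x) ∂(π x)) μ)
    (a : ℝ) (ha : ∀ n, ∫ x, (∫ y, (f n y - f n x) ∂(π x)) ∂μ ≤ a)
    (K : Set (EuclideanSpace ℝ (Fin d))) (hKmeas : MeasurableSet K)
    (m : ℝ) (hm : ∀ n, ∀ x ∈ K, f n x ≤ m)
    (H : Set (EuclideanSpace ℝ (Fin d)))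
    (htend : ∀ y ∈ H, Tendsto (fun n => f n y) atTop atTop) :
    ∫⁻ x in K, (π x) H ∂μ = 0 := by
  refine lintegral_measure_eq_zero_of_tendsto_top (B := ENNReal.ofReal (a + m * μ.real K)) hπmeas
    (fun n => ENNReal.measurable_ofReal.comp (hfmeas n)) ENNReal.ofReal_ne_top (fun n => ?_)
    (fun y hy => ENNReal.tendsto_ofReal_atTop.comp (htend y hy))
  calc ∫⁻ x in K, ∫⁻ y, ENNReal.ofReal (f n y) ∂(π x) ∂μ
      ≤ ENNReal.ofReal ((∫ x, ∫ y, (f n y - f n x) ∂(π x) ∂μ) + m * μ.real K) :=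
        setLIntegral_lintegral_ofReal_le hπprob hmart (hfconv n) (hfpos n) (hI1 n) (hI2 n)
          hKmeas (hm n)
    _ ≤ ENNReal.ofReal (a + m * μ.real K) := by gcongr; exact ha n

/-- Core estimate for `supp(ν) ⊆ C^B`: let `π_x` be a martingale kernel over `μ`, let
`f_n ≥ 0` be lower semicontinuous convex functions with
(i) `sup_n ∫∫ (f_n(y) - f_n(x)) π_x(dy) μ(dx) ≤ a < ∞` and
(ii) `f_n ≤ m` uniformly on a measurable set `K` with `μ(K) > 0`.
If `f_n → ∞` pointwise on an open half space `H`, then `∫_K π_x(H) μ(dx) = 0`. -/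
theorem halfspace_mass_vanishes {d : ℕ}
    (μ : Measure (EuclideanSpace ℝ (Fin d))) [IsProbabilityMeasure μ]
    (π : EuclideanSpace ℝ (Fin d) → Measure (EuclideanSpace ℝ (Fin d)))
    (hπprob : ∀ x, IsProbabilityMeasure (π x)) (hπmeas : Measurable π)
    (hmart : ∀ᵐ x ∂μ, Integrable (fun y => y) (π x) ∧ (∫ y, y ∂(π x)) = x)
    (f : ℕ → EuclideanSpace ℝ (Fin d) → ℝ)
    (hfconv : ∀ n, ConvexOn ℝ Set.univ (f n))
    (hflsc : ∀ n, LowerSemicontinuous (f n))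
    (hfmeas : ∀ n, Measurable (f n))
    (hfpos : ∀ n y, 0 ≤ f n y)
    (hI1 : ∀ n, ∀ᵐ x ∂μ, Integrable (f n) (π x))
    (hI2 : ∀ n, Integrable (fun x => ∫ y, (f n y - f n x) ∂(π x)) μ)
    (a : ℝ) (ha : ∀ n, ∫ x, (∫ y, (f n y - f n x) ∂(π x)) ∂μ ≤ a)
    (K : Set (EuclideanSpace ℝ (Fin d))) (hKmeas : MeasurableSet K) (hK : 0 < μ K)
    (m : ℝ) (hm : ∀ n, ∀ x ∈ K, f n x ≤ m)
    (H : Set (EuclideanSpace ℝ (Fin d))) (u : EuclideanSpace ℝ (Fin d)) (c : ℝ)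
    (hu : ‖u‖ = 1) (hH : H = {y | c < inner ℝ u y})
    (htend : ∀ y ∈ H, Tendsto (fun n => f n y) atTop atTop) :
    ∫⁻ x in K, (π x) H ∂μ = 0 :=
  halfspace_mass_vanishes_general μ π hπprob hπmeas hmart f hfconv hfmeas hfpos hI1 hI2 a ha K
    hKmeas m hm H htend
end
end
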